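/- arXiv:1709.10119 — 2 statements merged into one kernel-verified Lean document; each statement's English description precedes it below -/
import Mathlib

section
/- For every r > 0 and λ ∈ (0,1), f(p₀) tends to 0 as p₀ tends to 0 from the right, i.e., the limit of f along the filter of points of (0,1) approaching 0 is 0. -/
open scoped BigOperators

/-- `g r lam i x = x · r^i (1−λx)^i / ∏_{j=1}^i (r + j·x)`; for `i = 0` this is `x`. -/
noncomputable def g (r lam : ℝ) (i : ℕ) (x : ℝ) : ℝ :=
  x * r ^ i * (1 - lam * x) ^ i / ∏ j ∈ Finset.Icc 1 i, (r + (j : ℝ) * x)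

/-- `f r lam x = Σ_{i=0}^∞ g_i(x)`. -/
noncomputable def f (r lam : ℝ) (x : ℝ) : ℝ := ∑' i : ℕ, g r lam i x

/-!
Since `0 ≤ 1 - λx ≤ 1`, the terms satisfy `0 ≤ g_{N+i}(x) ≤ x (r / (r + N x))^i`: the first `N`
factors of the product are at least `r`, the remaining ones at least `r + N x`. Summing the first
`N` terms (each at most `x`) and the geometric tail gives `f(x) ≤ (N + 1) x + r / N` for every
`N ≥ 1`; taking `N` large and then `x` small makes this arbitrarily small.
-/

open Filter Topology Finset

section Bounds

variable {r lam x : ℝ}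

lemma prod_Icc_add_mul_pos (hr : 0 < r) (hx : 0 ≤ x) (n : ℕ) :
    0 < ∏ j ∈ Icc 1 n, (r + (j : ℝ) * x) :=
  prod_pos fun j _ => by positivity

lemma pow_mul_pow_le_prod_Icc (hr : 0 ≤ r) (hx : 0 ≤ x) (N i : ℕ) :
    r ^ N * (r + N * x) ^ i ≤ ∏ j ∈ Icc 1 (N + i), (r + (j : ℝ) * x) := by
  induction i with
  | zero =>
    rw [pow_zero, mul_one, add_zero]
    calc r ^ N = ∏ _j ∈ Icc 1 N, r := by simp
      _ ≤ ∏ j ∈ Icc 1 N, (r + (j : ℝ) * x) :=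
        prod_le_prod (fun _ _ => hr) fun j _ => le_add_of_nonneg_right (by positivity)
  | succ i ih =>
    rw [← add_assoc, prod_Icc_succ_top (by omega), pow_succ, ← mul_assoc]
    have hfactor : r + N * x ≤ r + ((N + i + 1 : ℕ) : ℝ) * x := by
      gcongr
      omega
    exact mul_le_mul ih hfactor (by positivity) (ih.trans' (by positivity))

lemma g_nonneg (hr : 0 < r) (hx : 0 ≤ x) (hlx : lam * x ≤ 1) (i : ℕ) : 0 ≤ g r lam i x := by
  have : 0 ≤ 1 - lam * x := by linarith
  exact div_nonneg (by positivity) (prod_Icc_add_mul_pos hr hx i).le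

lemma g_add_le (hr : 0 < r) (hx : 0 ≤ x) (hlx0 : 0 ≤ lam * x) (hlx1 : lam * x ≤ 1) (N i : ℕ) :
    g r lam (N + i) x ≤ x * (r / (r + N * x)) ^ i := by
  have hpow : (1 - lam * x) ^ (N + i) ≤ 1 := pow_le_one₀ (by linarith) (by linarith)
  calc g r lam (N + i) x
      ≤ x * r ^ (N + i) / ∏ j ∈ Icc 1 (N + i), (r + (j : ℝ) * x) := by
        refine div_le_div_of_nonneg_right ?_ (prod_Icc_add_mul_pos hr hx _).le
        exact mul_le_of_le_one_right (by positivity) hpow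
    _ ≤ x * r ^ (N + i) / (r ^ N * (r + N * x) ^ i) :=
        div_le_div_of_nonneg_left (by positivity) (by positivity)
          (pow_mul_pow_le_prod_Icc hr.le hx N i)
    _ = x * (r / (r + N * x)) ^ i := by
        have : 0 < r + N * x := by positivity
        rw [div_pow, pow_add]
        field_simp

lemma g_le_self (hr : 0 < r) (hx : 0 ≤ x) (hlx0 : 0 ≤ lam * x) (hlx1 : lam * x ≤ 1) (i : ℕ) :
    g r lam i x ≤ x := by
  simpa using g_add_le hr hx hlx0 hlx1 i 0

lemma geometric_ratio_lt_one (hr : 0 < r) (hx : 0 < x) {N : ℕ} (hN : 0 < N) :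
    r / (r + N * x) < 1 :=
  (div_lt_one (by positivity)).2 (lt_add_of_pos_right r (by positivity))

lemma summable_g (hr : 0 < r) (hx : 0 < x) (hlx0 : 0 ≤ lam * x) (hlx1 : lam * x ≤ 1) :
    Summable fun i => g r lam i x := by
  rw [← summable_nat_add_iff 1]
  refine Summable.of_nonneg_of_le (fun i => g_nonneg hr hx.le hlx1 _) (fun i => ?_)
    ((summable_geometric_of_lt_one (by positivity)
      (geometric_ratio_lt_one hr hx one_pos)).mul_left x)
  rw [add_comm]
  exact g_add_le hr hx.le hlx0 hlx1 1 i

lemma f_le (hr : 0 < r) (hx : 0 < x) (hlx0 : 0 ≤ lam * x) (hlx1 : lam * x ≤ 1)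
    {N : ℕ} (hN : 0 < N) : f r lam x ≤ (N + 1) * x + r / N := by
  have hq1 := geometric_ratio_lt_one hr hx hN
  have hq0 : 0 ≤ r / (r + N * x) := by positivity
  have hhead : ∑ i ∈ range N, g r lam i x ≤ N * x := by
    simpa using sum_le_sum fun i (_ : i ∈ range N) => g_le_self hr hx.le hlx0 hlx1 i
  have htail : ∑' i, g r lam (i + N) x ≤ ∑' i, x * (r / (r + N * x)) ^ i :=
    Summable.tsum_le_tsum (fun i => by rw [add_comm]; exact g_add_le hr hx.le hlx0 hlx1 N i)
      ((summable_nat_add_iff (f := fun n => g r lam n x) N).2 (summable_g hr hx hlx0 hlx1))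
      ((summable_geometric_of_lt_one hq0 hq1).mul_left x)
  have hgeom : ∑' i, x * (r / (r + N * x)) ^ i = r / N + x := by
    rw [tsum_mul_left, tsum_geometric_of_lt_one hq0 hq1]
    have : (0 : ℝ) < N := by exact_mod_cast hN
    field_simp
    ring
  rw [f, ← (summable_g hr hx hlx0 hlx1).sum_add_tsum_nat_add N]
  linarith

end Bounds

theorem stmt3 (r lam : ℝ) (hr : 0 < r) (hlam : lam ∈ Set.Ioo (0:ℝ) 1) :
    Filter.Tendsto (f r lam) (nhdsWithin 0 (Set.Ioo (0:ℝ) 1)) (nhds 0) := by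
  obtain ⟨hlam0, hlam1⟩ := hlam
  have hlx : ∀ x ∈ Set.Ioo (0 : ℝ) 1, 0 ≤ lam * x ∧ lam * x ≤ 1 := fun x hx =>
    ⟨mul_nonneg hlam0.le hx.1.le, mul_le_one₀ hlam1.le hx.1.le hx.2.le⟩
  refine tendsto_order.2 ⟨fun a ha => ?_, fun ε hε => ?_⟩
  · filter_upwards [self_mem_nhdsWithin] with x hx
    exact ha.trans_le (tsum_nonneg fun i => g_nonneg hr hx.1.le (hlx x hx).2 i)
  · obtain ⟨N, hN⟩ := exists_nat_gt (r / ε)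
    have hN0 : 0 < N := by exact_mod_cast (div_pos hr hε).trans hN
    have hbound : Tendsto (fun x : ℝ => (N + 1) * x + r / N) (𝓝[Set.Ioo 0 1] 0) (𝓝 (r / N)) :=
      tendsto_nhdsWithin_of_tendsto_nhds <|
        (by fun_prop : Continuous fun x : ℝ => (N + 1) * x + r / N).tendsto' 0 _ (by simp)
    have hrN : r / N < ε := (div_lt_comm₀ (by positivity) hε).2 hN
    filter_upwards [self_mem_nhdsWithin, hbound.eventually (gt_mem_nhds hrN)] with x hx hxε
    exact (f_le hr hx.1 (hlx x hx).1 (hlx x hx).2 hN0).trans_lt hxε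
end

section
/- Let r > 0, λ ∈ (0,1) and p₀ ∈ (0,1). If there exists an integer k ≥ 1 such that the derivative of g_k at p₀ is negative, then for every integer i ≥ k the derivative of g_i at p₀ is negative. -/
open scoped BigOperators

/-!
Each `g_{n+1}` is `g_n` times the factor `r (1 - λx) / (r + (n+1) x)`, which on `(0, 1)` is
positive and strictly decreasing. Since `g_n > 0` there, the product rule shows that
`g_n' < 0` forces `g_{n+1}' < 0`, and the claim follows by induction on `i ≥ k`.
-/

lemma g_succ (r lam : ℝ) (n : ℕ) (x : ℝ) :
    g r lam (n + 1) x = g r lam n x * (r * (1 - lam * x) / (r + (n + 1) * x)) := by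
  rw [g, g, Finset.prod_Icc_succ_top (Nat.le_add_left 1 n), div_mul_div_comm]
  push_cast
  ring

lemma g_pos {r lam x : ℝ} (hr : 0 < r) (hx : 0 < x) (hlx : 0 < 1 - lam * x) (n : ℕ) :
    0 < g r lam n x := by
  have hprod : 0 < ∏ j ∈ Finset.Icc 1 n, (r + (j : ℝ) * x) :=
    Finset.prod_pos fun j _ => by positivity
  unfold g
  positivity

lemma hasDerivAt_linear_fractional {r lam c x : ℝ} (hx : r + c * x ≠ 0) :
    HasDerivAt (fun y => r * (1 - lam * y) / (r + c * y))
      (-(r * (r * lam + c)) / (r + c * x) ^ 2) x := by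
  have hnum : HasDerivAt (fun y => r * (1 - lam * y)) (r * -lam) x := by
    simpa using (((hasDerivAt_id x).const_mul lam).const_sub 1).const_mul r
  have hden : HasDerivAt (fun y => r + c * y) c x := by
    simpa using ((hasDerivAt_id x).const_mul c).const_add r
  exact (hnum.div hden hx).congr_deriv (by ring)

lemma deriv_g_succ_neg {r lam x : ℝ} (hr : 0 < r) (hlam : 0 ≤ lam) (hx : 0 < x)
    (hlx : 0 < 1 - lam * x) {n : ℕ} (hn : deriv (g r lam n) x < 0) :
    deriv (g r lam (n + 1)) x < 0 := by
  have hden : 0 < r + (n + 1) * x := by positivity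
  -- `deriv` is `0` at points of non-differentiability, so `hn` already gives differentiability.
  have hdiff : DifferentiableAt ℝ (g r lam n) x := differentiableAt_of_deriv_ne_zero hn.ne
  have hprod := hdiff.hasDerivAt.mul (hasDerivAt_linear_fractional (lam := lam) hden.ne')
  have hfun : g r lam (n + 1) = g r lam n * fun y => r * (1 - lam * y) / (r + (n + 1) * y) :=
    funext (g_succ r lam n)
  rw [hfun, hprod.deriv]
  have hfactor_pos : 0 < r * (1 - lam * x) / (r + (n + 1) * x) := by positivity
  have hfactor_deriv_neg : -(r * (r * lam + (n + 1))) / (r + (n + 1) * x) ^ 2 < 0 :=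
    div_neg_of_neg_of_pos (neg_neg_of_pos (by positivity)) (by positivity)
  linarith [mul_neg_of_neg_of_pos hn hfactor_pos,
    mul_neg_of_pos_of_neg (g_pos hr hx hlx n) hfactor_deriv_neg]

theorem stmt17_general (r lam p₀ : ℝ) (hr : 0 < r) (hlam : lam ∈ Set.Ioo (0:ℝ) 1)
    (hp : p₀ ∈ Set.Ioo (0:ℝ) 1) (k : ℕ)
    (hneg : deriv (g r lam k) p₀ < 0) :
    ∀ i : ℕ, k ≤ i → deriv (g r lam i) p₀ < 0 := by
  obtain ⟨hl0, hl1⟩ := hlam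
  obtain ⟨hp0, hp1⟩ := hp
  have hlp : 0 < 1 - lam * p₀ := by nlinarith
  intro i hi
  induction i, hi using Nat.le_induction with
  | base => exact hneg
  | succ n _ ih => exact deriv_g_succ_neg hr hl0.le hp0 hlp ih

theorem stmt17 (r lam p₀ : ℝ) (hr : 0 < r) (hlam : lam ∈ Set.Ioo (0:ℝ) 1)
    (hp : p₀ ∈ Set.Ioo (0:ℝ) 1) (k : ℕ) (hk : 1 ≤ k)
    (hneg : deriv (g r lam k) p₀ < 0) :
    ∀ i : ℕ, k ≤ i → deriv (g r lam i) p₀ < 0 :=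
  stmt17_general r lam p₀ hr hlam hp k hneg
end
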